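/- arXiv:1012.2811 — 2 statements merged into one kernel-verified Lean document; each statement's English description precedes it below -/
import Mathlib

section
/- Let $L$ be a linear space of bounded random variables on a probability space $(\Omega, \mathcal{A}, P_0)$. There exists a finitely additive probability $P$ on $\mathcal{A}$ with $P \ll P_0$ and $E_P(X) = 0$ for all $X \in L$ if and only if $\operatorname{ess\,sup}(X) \ge 0$ for every $X \in L$. -/
open MeasureTheory Set

namespace FAP

variable {Ω : Type*}

/-- A finitely additive probability on the power set of `Ω`. -/
def IsFAP (P : Set Ω → ℝ) : Prop :=
  P univ = 1 ∧ (∀ A : Set Ω, 0 ≤ P A) ∧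
    ∀ A B : Set Ω, Disjoint A B → P (A ∪ B) = P A + P B

/-- A finitely additive probability on the σ-field of a measurable space `Ω`. -/
def IsFAPm [MeasurableSpace Ω] (P : Set Ω → ℝ) : Prop :=
  P univ = 1 ∧ (∀ A : Set Ω, MeasurableSet A → 0 ≤ P A) ∧
    ∀ A B : Set Ω, MeasurableSet A → MeasurableSet B → Disjoint A B →
      P (A ∪ B) = P A + P B

/-- The finitely additive integral of a bounded function `X` with respect to a
finitely additive probability `P`, defined via the layer-cake formula
(which agrees with the uniform-limit-of-simple-functions definition). -/
noncomputable def faIntegral (P : Set Ω → ℝ) (X : Ω → ℝ) : ℝ :=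
  (∫ t in Ioi (0 : ℝ), P {ω | t < X ω}) -
    (∫ t in Iio (0 : ℝ), (1 - P {ω | t < X ω}))

/-- `P` is absolutely continuous with respect to the (countably additive) measure `P₀`. -/
def AC [MeasurableSpace Ω] (P : Set Ω → ℝ) (P₀ : Measure Ω) : Prop :=
  ∀ A : Set Ω, MeasurableSet A → P₀ A = 0 → P A = 0

/-- `P` and `P₀` have the same null sets. -/
def EquivP [MeasurableSpace Ω] (P : Set Ω → ℝ) (P₀ : Measure Ω) : Prop :=
  ∀ A : Set Ω, MeasurableSet A → (P A = 0 ↔ P₀ A = 0)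

/-- `P` is pure: the only countably additive measure `Γ` with `0 ≤ Γ ≤ P` is `Γ = 0`. -/
def IsPure [MeasurableSpace Ω] (P : Set Ω → ℝ) : Prop :=
  ∀ Γ : Measure Ω, (∀ A : Set Ω, MeasurableSet A → Γ A ≤ ENNReal.ofReal (P A)) → Γ = 0

/-- The essential supremum `inf {a : P₀(X > a) = 0}` of a random variable `X`. -/
noncomputable def essSupR [MeasurableSpace Ω] (P₀ : Measure Ω) (X : Ω → ℝ) : ℝ :=
  sInf {a : ℝ | P₀ {ω | a < X ω} = 0}

end FAP

open FAP

/-!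
(⇒) Under `P ≪ P₀` the layer-cake integrand `t ↦ P (X > t)` vanishes beyond `ess sup X` and is
at most `1` before it, so `E_P X ≤ ess sup X`.

(⇐) The essential supremum is sublinear on bounded functions and nonnegative on `L`, so by
Hahn–Banach the zero functional on `L` extends to a linear `g ≤ ess sup` on all bounded functions.
Such a `g` is monotone with `g 1 = 1`, hence `P A := g 1_A` is a finitely additive probability with
`P ≪ P₀`. Finally `E_P X = g X`: if `|X| < R`, the right and left Riemann sums of `t ↦ 1_{X > t}`
on `[-R, R]` bound `X + R` pointwise from below and above; applying `g`, both `g X + R` and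
`∫_{-R}^{R} P (X > t) dt` lie between the Riemann sums of `t ↦ P (X > t)`, whose difference
tends to `0`.
-/

open Filter

section RiemannSum

variable {E F : Type*} [AddCommMonoid E] [Module ℝ E] [AddCommMonoid F] [Module ℝ F]

noncomputable def leftRiemannSum (f : ℝ → E) (a b : ℝ) (n : ℕ) : E :=
  ((b - a) / n) • ∑ i ∈ Finset.range n, f (a + i * ((b - a) / n))

noncomputable def rightRiemannSum (f : ℝ → E) (a b : ℝ) (n : ℕ) : E :=
  ((b - a) / n) • ∑ i ∈ Finset.range n, f (a + (i + 1) * ((b - a) / n))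

theorem LinearMap.map_leftRiemannSum (φ : E →ₗ[ℝ] F) (f : ℝ → E) (a b : ℝ) (n : ℕ) :
    φ (leftRiemannSum f a b n) = leftRiemannSum (φ ∘ f) a b n := by
  simp [leftRiemannSum, map_sum]

theorem LinearMap.map_rightRiemannSum (φ : E →ₗ[ℝ] F) (f : ℝ → E) (a b : ℝ) (n : ℕ) :
    φ (rightRiemannSum f a b n) = rightRiemannSum (φ ∘ f) a b n := by
  simp [rightRiemannSum, map_sum]

variable {f : ℝ → ℝ} {a b : ℝ}

theorem leftRiemannSum_sub_rightRiemannSum (f : ℝ → ℝ) (a b : ℝ) {n : ℕ} (hn : n ≠ 0) :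
    leftRiemannSum f a b n - rightRiemannSum f a b n = (b - a) / n * (f a - f b) := by
  have hb : a + n * ((b - a) / n) = b := by field_simp; ring
  have := Finset.sum_range_sub' (fun i : ℕ => f (a + i * ((b - a) / n))) n
  push_cast at this
  rw [leftRiemannSum, rightRiemannSum, smul_eq_mul, smul_eq_mul, ← mul_sub,
    ← Finset.sum_sub_distrib, this, hb, zero_mul, add_zero]

theorem intervalIntegral_eq_mul_integral_rescale (f : ℝ → ℝ) (a b : ℝ) {n : ℕ} (hn : n ≠ 0) :
    ∫ t in a..b, f t = (b - a) / n * ∫ u in (0 : ℝ)..n, f (a + u * ((b - a) / n)) := by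
  have := intervalIntegral.smul_integral_comp_mul_add (a := 0) (b := n) f ((b - a) / n) a
  rw [mul_zero, zero_add, div_mul_cancel₀ _ (Nat.cast_ne_zero.2 hn), sub_add_cancel] at this
  simpa only [smul_eq_mul, mul_comm _ ((b - a) / n), add_comm _ a] using this.symm

theorem Antitone.integral_le_leftRiemannSum (hf : Antitone f) (hab : a ≤ b) {n : ℕ}
    (hn : n ≠ 0) : ∫ t in a..b, f t ≤ leftRiemannSum f a b n := by
  have hδ : 0 ≤ (b - a) / n := div_nonneg (sub_nonneg.2 hab) n.cast_nonneg
  have hg : Antitone fun u => f (a + u * ((b - a) / n)) :=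
    hf.comp_monotone fun u v huv => by gcongr
  rw [intervalIntegral_eq_mul_integral_rescale f a b hn, leftRiemannSum, smul_eq_mul]
  gcongr
  simpa using (hg.antitoneOn (Icc 0 (0 + n))).integral_le_sum

theorem Antitone.rightRiemannSum_le_integral (hf : Antitone f) (hab : a ≤ b) {n : ℕ}
    (hn : n ≠ 0) : rightRiemannSum f a b n ≤ ∫ t in a..b, f t := by
  have hδ : 0 ≤ (b - a) / n := div_nonneg (sub_nonneg.2 hab) n.cast_nonneg
  have hg : Antitone fun u => f (a + u * ((b - a) / n)) :=
    hf.comp_monotone fun u v huv => by gcongr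
  rw [intervalIntegral_eq_mul_integral_rescale f a b hn, rightRiemannSum, smul_eq_mul]
  gcongr
  simpa using (hg.antitoneOn (Icc 0 (0 + n))).sum_le_integral

theorem Antitone.eq_integral_of_riemannSum_le (hf : Antitone f) (hab : a ≤ b) {y : ℝ}
    (hy : ∀ n : ℕ, n ≠ 0 → rightRiemannSum f a b n ≤ y ∧ y ≤ leftRiemannSum f a b n) :
    y = ∫ t in a..b, f t := by
  have hgap : ∀ᶠ n : ℕ in atTop, |y - ∫ t in a..b, f t| ≤ (b - a) * (f a - f b) / n := by
    filter_upwards [eventually_ne_atTop 0] with n hn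
    have := leftRiemannSum_sub_rightRiemannSum f a b hn
    rw [abs_le, mul_div_right_comm, ← this]
    constructor <;> linarith [hy n hn, hf.integral_le_leftRiemannSum hab hn,
      hf.rightRiemannSum_le_integral hab hn]
  have := _root_.ge_of_tendsto (tendsto_const_div_atTop_nhds_zero_nat _) hgap
  exact sub_eq_zero.1 (abs_nonpos_iff.1 this)

theorem antitone_indicator_Iio_one (x : ℝ) : Antitone ((Iio x).indicator (1 : ℝ → ℝ)) := by
  intro s t hst
  simp only [indicator_apply, mem_Iio, Pi.one_apply]
  split_ifs <;> linarith

theorem integral_indicator_Iio_one {x : ℝ} (hx : x ∈ Icc a b) :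
    ∫ t in a..b, (Iio x).indicator 1 t = x - a := by
  rw [intervalIntegral.integral_of_le (hx.1.trans hx.2), integral_indicator_one measurableSet_Iio,
    Measure.real, Measure.restrict_apply measurableSet_Iio]
  have : Iio x ∩ Ioc a b = Ioo a x := by
    ext t
    simp only [mem_inter_iff, mem_Iio, mem_Ioc, mem_Ioo]
    constructor
    · exact fun h => ⟨h.2.1, h.1⟩
    · exact fun h => ⟨h.2, h.1, h.2.le.trans hx.2⟩
  rw [this, Real.volume_Ioo, ENNReal.toReal_ofReal (sub_nonneg.2 hx.1)]

theorem riemannSum_indicator_Iio_le {x : ℝ} (hx : x ∈ Icc a b) {n : ℕ} (hn : n ≠ 0) :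
    rightRiemannSum ((Iio x).indicator 1) a b n ≤ x - a ∧
      x - a ≤ leftRiemannSum ((Iio x).indicator 1) a b n := by
  have hab := hx.1.trans hx.2
  rw [← integral_indicator_Iio_one hx]
  exact ⟨(antitone_indicator_Iio_one x).rightRiemannSum_le_integral hab hn,
    (antitone_indicator_Iio_one x).integral_le_leftRiemannSum hab hn⟩

theorem Antitone.layerCake (hf : Antitone f) (ha : a ≤ 0) (hb : 0 ≤ b)
    (h_one : ∀ t ≤ a, f t = 1) (h_zero : ∀ t, b ≤ t → f t = 0) :
    (∫ t in Ioi 0, f t) - ∫ t in Iio 0, (1 - f t) = (∫ t in a..b, f t) + a := by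
  have hpos : ∫ t in Ioi 0, f t = ∫ t in (0 : ℝ)..b, f t := by
    rw [intervalIntegral.integral_of_le hb]
    refine setIntegral_eq_of_subset_of_forall_sdiff_eq_zero measurableSet_Ioi Ioc_subset_Ioi_self
      fun t ht => h_zero t (not_lt.1 fun htb => ht.2 ⟨ht.1, htb.le⟩)
  have hneg : ∫ t in Iio 0, (1 - f t) = ∫ t in a..0, (1 - f t) := by
    rw [intervalIntegral.integral_of_le ha, integral_Ioc_eq_integral_Ioo]
    refine setIntegral_eq_of_subset_of_forall_sdiff_eq_zero measurableSet_Iio Ioo_subset_Iio_self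
      fun t ht => by rw [h_one t (not_lt.1 fun hat => ht.2 ⟨hat, ht.1⟩), sub_self]
  rw [hpos, hneg, intervalIntegral.integral_sub intervalIntegrable_const hf.intervalIntegrable,
    intervalIntegral.integral_const, ← intervalIntegral.integral_add_adjacent_intervals
      (hf.intervalIntegrable (a := a) (b := 0)) (hf.intervalIntegrable (a := 0) (b := b))]
  simp only [smul_eq_mul, mul_one]
  ring

end RiemannSum

namespace FAP

variable {Ω : Type*}

def boundedFun (Ω : Type*) : Submodule ℝ (Ω → ℝ) where
  carrier := {X | ∃ M, ∀ ω, |X ω| ≤ M}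
  add_mem' := by
    rintro X Y ⟨M, hM⟩ ⟨N, hN⟩
    exact ⟨M + N, fun ω => (abs_add_le _ _).trans (add_le_add (hM ω) (hN ω))⟩
  zero_mem' := ⟨0, fun ω => by simp⟩
  smul_mem' := by
    rintro c X ⟨M, hM⟩
    exact ⟨|c| * M, fun ω => by
      rw [Pi.smul_apply, smul_eq_mul, abs_mul]
      exact mul_le_mul_of_nonneg_left (hM ω) (abs_nonneg c)⟩

namespace boundedFun

theorem exists_abs_lt {X : Ω → ℝ} (hX : X ∈ boundedFun Ω) : ∃ R, 0 ≤ R ∧ ∀ ω, |X ω| < R := by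
  obtain ⟨M, hM⟩ := hX
  exact ⟨|M| + 1, by positivity, fun ω => (hM ω).trans_lt (by linarith [le_abs_self M])⟩

theorem isBoundedUnder_le [MeasurableSpace Ω] {μ : Measure Ω} {X : Ω → ℝ}
    (hX : X ∈ boundedFun Ω) : IsBoundedUnder (· ≤ ·) (ae μ) X := by
  obtain ⟨M, hM⟩ := hX
  exact isBoundedUnder_of ⟨M, fun ω => le_of_abs_le (hM ω)⟩

theorem isBoundedUnder_ge [MeasurableSpace Ω] {μ : Measure Ω} {X : Ω → ℝ}
    (hX : X ∈ boundedFun Ω) : IsBoundedUnder (· ≥ ·) (ae μ) X := by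
  obtain ⟨M, hM⟩ := hX
  exact isBoundedUnder_of ⟨-M, fun ω => neg_le_of_abs_le (hM ω)⟩

noncomputable def indicator (A : Set Ω) : boundedFun Ω :=
  ⟨A.indicator 1, 1, fun ω => by by_cases h : ω ∈ A <;> simp [h]⟩

@[simp]
theorem coe_indicator (A : Set Ω) : (indicator A : Ω → ℝ) = A.indicator 1 := rfl

theorem indicator_empty : indicator (∅ : Set Ω) = 0 := Subtype.ext (Set.indicator_empty 1)

theorem indicator_nonneg (A : Set Ω) : 0 ≤ indicator A :=
  fun _ => Set.indicator_nonneg (fun _ _ => zero_le_one) _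

theorem indicator_mono : Monotone (indicator : Set Ω → boundedFun Ω) := fun _ _ h =>
  indicator_le_indicator_of_subset h fun _ => zero_le_one

theorem indicator_union {A B : Set Ω} (h : Disjoint A B) :
    indicator (A ∪ B) = indicator A + indicator B :=
  Subtype.ext (indicator_union_of_disjoint h 1)

noncomputable def levelIndicator (X : Ω → ℝ) (t : ℝ) : boundedFun Ω :=
  indicator {ω | t < X ω}

theorem antitone_levelIndicator (X : Ω → ℝ) : Antitone (levelIndicator X) :=
  fun _ _ hst => indicator_mono fun _ hω => hst.trans_lt hω

theorem levelIndicator_apply (X : Ω → ℝ) (t : ℝ) (ω : Ω) :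
    (levelIndicator X t : Ω → ℝ) ω = (Iio (X ω)).indicator 1 t := by
  simp [levelIndicator, indicator_apply]

theorem coe_leftRiemannSum_apply (f : ℝ → boundedFun Ω) (a b : ℝ) (n : ℕ) (ω : Ω) :
    ((leftRiemannSum f a b n : boundedFun Ω) : Ω → ℝ) ω =
      leftRiemannSum (fun t => (f t : Ω → ℝ) ω) a b n :=
  ((LinearMap.proj ω).comp (boundedFun Ω).subtype).map_leftRiemannSum f a b n

theorem coe_rightRiemannSum_apply (f : ℝ → boundedFun Ω) (a b : ℝ) (n : ℕ) (ω : Ω) :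
    ((rightRiemannSum f a b n : boundedFun Ω) : Ω → ℝ) ω =
      rightRiemannSum (fun t => (f t : Ω → ℝ) ω) a b n :=
  ((LinearMap.proj ω).comp (boundedFun Ω).subtype).map_rightRiemannSum f a b n

theorem riemannSum_levelIndicator_le (X : boundedFun Ω) {R : ℝ} (hXR : ∀ ω, |X.1 ω| < R)
    {n : ℕ} (hn : n ≠ 0) :
    rightRiemannSum (levelIndicator X) (-R) R n ≤ X + R • indicator univ ∧
      X + R • indicator univ ≤ leftRiemannSum (levelIndicator X) (-R) R n := by
  have hsandwich ω := riemannSum_indicator_Iio_le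
    ⟨(neg_lt_of_abs_lt (hXR ω)).le, (lt_of_abs_lt (hXR ω)).le⟩ hn
  have hX ω : ((X + R • indicator univ : boundedFun Ω) : Ω → ℝ) ω = X.1 ω - -R := by simp
  refine ⟨fun ω => ?_, fun ω => ?_⟩
  · rw [coe_rightRiemannSum_apply, hX]
    simpa only [levelIndicator_apply] using (hsandwich ω).1
  · rw [coe_leftRiemannSum_apply, hX]
    simpa only [levelIndicator_apply] using (hsandwich ω).2

end boundedFun

open boundedFun

theorem IsFAP.isFAPm [MeasurableSpace Ω] {P : Set Ω → ℝ} (hP : IsFAP P) : IsFAPm P :=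
  ⟨hP.1, fun A _ => hP.2.1 A, fun A B _ _ => hP.2.2 A B⟩

section IsFAPm

variable [MeasurableSpace Ω] {P : Set Ω → ℝ}

theorem IsFAPm.empty (hP : IsFAPm P) : P ∅ = 0 := by
  simpa using hP.2.2 ∅ ∅ MeasurableSet.empty MeasurableSet.empty (disjoint_empty _)

theorem IsFAPm.mono (hP : IsFAPm P) {A B : Set Ω} (hA : MeasurableSet A) (hB : MeasurableSet B)
    (hAB : A ⊆ B) : P A ≤ P B := by
  have := hP.2.2 A (B \ A) hA (hB.diff hA) disjoint_sdiff_right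
  rw [union_sdiff_cancel hAB] at this
  linarith [hP.2.1 (B \ A) (hB.diff hA)]

theorem IsFAPm.le_one (hP : IsFAPm P) {A : Set Ω} (hA : MeasurableSet A) : P A ≤ 1 :=
  hP.1 ▸ hP.mono hA MeasurableSet.univ (subset_univ A)

end IsFAPm

theorem faIntegral_eq_integral_sub {P : Set Ω → ℝ} {X : Ω → ℝ} {R : ℝ} (hR : 0 ≤ R)
    (hXR : ∀ ω, |X ω| < R) (h_univ : P univ = 1) (h_empty : P ∅ = 0)
    (hF : Antitone fun t => P {ω | t < X ω}) :
    faIntegral P X = (∫ t in -R..R, P {ω | t < X ω}) - R := by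
  rw [faIntegral, hF.layerCake (neg_nonpos.2 hR) hR, sub_eq_add_neg]
  · intro t ht
    convert h_univ
    exact eq_univ_of_forall fun ω => ht.trans_lt (neg_lt_of_abs_lt (hXR ω))
  · intro t ht
    convert h_empty
    exact eq_empty_of_forall_notMem fun ω hω => (lt_of_abs_lt (hXR ω)).not_ge (ht.trans hω.le)

theorem essSupR_eq_essSup [MeasurableSpace Ω] (μ : Measure Ω) (X : Ω → ℝ) :
    essSupR μ X = essSup X μ :=
  (essSup_eq_sInf μ X).symm

theorem IsFAPm.faIntegral_le_essSup [MeasurableSpace Ω] {μ : Measure Ω} [NeZero μ]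
    {P : Set Ω → ℝ} (hP : IsFAPm P) (hAC : AC P μ) {X : Ω → ℝ} (hXm : Measurable X)
    (hX : X ∈ boundedFun Ω) : faIntegral P X ≤ essSup X μ := by
  obtain ⟨R, hR, hXR⟩ := exists_abs_lt hX
  have hmeas t : MeasurableSet {ω | t < X ω} := hXm measurableSet_Ioi
  have hF : Antitone fun t => P {ω | t < X ω} := fun s t hst =>
    hP.mono (hmeas t) (hmeas s) fun ω hω => hst.trans_lt hω
  have he : essSup X μ ∈ Icc (-R) R := by
    constructor
    · exact (essSup_const' (-R)).symm.trans_le <| essSup_mono_ae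
        (ae_of_all _ fun ω => (neg_lt_of_abs_lt (hXR ω)).le)
        (isCoboundedUnder_le_of_le _ fun _ => le_rfl) (isBoundedUnder_le hX)
    · exact essSup_le_of_ae_le R (ae_of_all _ fun ω => (lt_of_abs_lt (hXR ω)).le)
        (isBoundedUnder_ge hX).isCoboundedUnder_le
  have h_null : μ {ω | essSup X μ < X ω} = 0 := by
    simpa only [not_le] using ae_iff.1 (ae_le_essSup (isBoundedUnder_le hX))
  have hF_le t : P {ω | t < X ω} ≤ (Iio (essSup X μ)).indicator 1 t := by
    by_cases ht : t < essSup X μ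
    · simpa [ht] using hP.le_one (hmeas t)
    · rw [indicator_of_notMem (show t ∉ Iio _ from ht), hAC _ (hmeas t)
        (measure_mono_null (fun ω hω => (not_lt.1 ht).trans_lt hω) h_null)]
  calc faIntegral P X = (∫ t in -R..R, P {ω | t < X ω}) - R :=
        faIntegral_eq_integral_sub hR hXR hP.1 hP.empty hF
    _ ≤ (∫ t in -R..R, (Iio (essSup X μ)).indicator 1 t) - R := by
        gcongr
        exact intervalIntegral.integral_mono (neg_le_self hR) hF.intervalIntegrable
          (antitone_indicator_Iio_one _).intervalIntegrable hF_le
    _ = essSup X μ := by rw [integral_indicator_Iio_one he]; ring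

section DominatedByEssSup

variable [MeasurableSpace Ω] {μ : Measure Ω} [NeZero μ]

theorem boundedFun.essSup_add_le (X Y : boundedFun Ω) :
    essSup ((X + Y : boundedFun Ω) : Ω → ℝ) μ ≤ essSup (X : Ω → ℝ) μ + essSup (Y : Ω → ℝ) μ :=
  limsup_add_le (isBoundedUnder_ge X.2) (isBoundedUnder_le X.2)
    (isBoundedUnder_ge Y.2).isCoboundedUnder_le (isBoundedUnder_le Y.2)

theorem boundedFun.essSup_smul {c : ℝ} (hc : 0 < c) (X : boundedFun Ω) :
    essSup ((c • X : boundedFun Ω) : Ω → ℝ) μ = c * essSup (X : Ω → ℝ) μ :=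
  ((OrderIso.mulLeft₀ c hc).limsup_apply (isBoundedUnder_le X.2)
    (isBoundedUnder_ge X.2).isCoboundedUnder_le (isBoundedUnder_le (c • X).2)
    (isBoundedUnder_ge (c • X).2).isCoboundedUnder_le).symm

theorem exists_linearMap_le_essSup (L : Submodule ℝ (Ω → ℝ)) (hL : ∀ X ∈ L, 0 ≤ essSup X μ) :
    ∃ g : boundedFun Ω →ₗ[ℝ] ℝ,
      (∀ X : boundedFun Ω, (X : Ω → ℝ) ∈ L → g X = 0) ∧ ∀ X, g X ≤ essSup (X : Ω → ℝ) μ := by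
  obtain ⟨g, hg_L, hg⟩ := exists_extension_of_le_sublinear
    (⟨L.comap (boundedFun Ω).subtype, 0⟩ : boundedFun Ω →ₗ.[ℝ] ℝ)
    (fun X : boundedFun Ω => essSup (X : Ω → ℝ) μ) (fun _ hc X => essSup_smul hc X) essSup_add_le
    (fun X => by simpa using hL _ X.2)
  exact ⟨g, fun X hX => by simpa using hg_L ⟨X, hX⟩, hg⟩

variable {g : boundedFun Ω →ₗ[ℝ] ℝ}

theorem monotone_of_le_essSup (hg : ∀ X, g X ≤ essSup (X : Ω → ℝ) μ) : Monotone g := by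
  intro X Y hXY
  have : g (X - Y) ≤ 0 := (hg _).trans <| essSup_le_of_ae_le 0
    (ae_of_all _ fun ω => sub_nonpos.2 (hXY ω)) (isBoundedUnder_ge (X - Y).2).isCoboundedUnder_le
  rwa [map_sub, sub_nonpos] at this

theorem map_indicator_univ_of_le_essSup (hg : ∀ X, g X ≤ essSup (X : Ω → ℝ) μ) :
    g (indicator univ) = 1 := by
  have h_le : g (indicator univ) ≤ 1 := by simpa [Pi.one_def] using hg (indicator univ)
  have h_ge : -g (indicator univ) ≤ -1 := by
    simpa [Pi.one_def, Pi.neg_def] using hg (-indicator univ)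
  linarith

theorem map_indicator_of_le_essSup (hg : ∀ X, g X ≤ essSup (X : Ω → ℝ) μ) {A : Set Ω}
    (hA : μ A = 0) : g (indicator A) = 0 := by
  refine le_antisymm ((hg _).trans (essSup_le_of_ae_le 0 (indicator_meas_zero hA).le
    (isBoundedUnder_ge (indicator A).2).isCoboundedUnder_le)) ?_
  simpa using monotone_of_le_essSup hg (indicator_nonneg A)

end DominatedByEssSup

section PositiveFunctional

variable {g : boundedFun Ω →ₗ[ℝ] ℝ}

theorem isFAP_of_monotone (hg : Monotone g) (h_univ : g (indicator univ) = 1) :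
    IsFAP fun A => g (indicator A) :=
  ⟨h_univ, fun A => by simpa using hg (indicator_nonneg A),
    fun A B h => by simp only [indicator_union h, map_add]⟩

theorem faIntegral_eq_of_monotone (hg : Monotone g) (h_univ : g (indicator univ) = 1)
    (X : boundedFun Ω) :
    faIntegral (fun A => g (indicator A)) X = g X := by
  obtain ⟨R, hR, hXR⟩ := exists_abs_lt X.2
  have hF : Antitone (g ∘ levelIndicator X) := hg.comp_antitone (antitone_levelIndicator _)
  have hgX : g (X + R • boundedFun.indicator univ) = ∫ t in -R..R, g (levelIndicator X t) :=
    hF.eq_integral_of_riemannSum_le (neg_le_self hR) fun n hn => by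
      rw [← LinearMap.map_rightRiemannSum, ← LinearMap.map_leftRiemannSum]
      exact ⟨hg (riemannSum_levelIndicator_le X hXR hn).1,
        hg (riemannSum_levelIndicator_le X hXR hn).2⟩
  rw [map_add, map_smul, h_univ, smul_eq_mul, mul_one] at hgX
  rw [faIntegral_eq_integral_sub hR hXR h_univ (by rw [indicator_empty, map_zero]) hF]
  exact (eq_sub_of_add_eq hgX).symm

end PositiveFunctional

end FAP

/-- there is a finitely additive probability P ≪ P₀ with E_P(X) = 0
for all X ∈ L iff ess sup X ≥ 0 for every X ∈ L. -/
theorem stmt7 {Ω : Type*} [MeasurableSpace Ω] (P₀ : Measure Ω) [IsProbabilityMeasure P₀]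
    (L : Submodule ℝ (Ω → ℝ))
    (hL : ∀ X ∈ L, Measurable X ∧ ∃ M : ℝ, ∀ ω, |X ω| ≤ M) :
    (∃ P : Set Ω → ℝ, FAP.IsFAPm P ∧ FAP.AC P P₀ ∧
        ∀ X ∈ L, FAP.faIntegral P X = 0)
    ↔ ∀ X ∈ L, 0 ≤ FAP.essSupR P₀ X := by
  simp only [essSupR_eq_essSup]
  constructor
  · rintro ⟨P, hP, hAC, hP_L⟩ X hX
    rw [← hP_L X hX]
    exact hP.faIntegral_le_essSup hAC (hL X hX).1 (hL X hX).2
  · intro hess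
    obtain ⟨g, hg_L, hg⟩ := exists_linearMap_le_essSup L hess
    have hg_mono := monotone_of_le_essSup hg
    have hg_univ := map_indicator_univ_of_le_essSup hg
    refine ⟨fun A => g (boundedFun.indicator A), (isFAP_of_monotone hg_mono hg_univ).isFAPm,
      fun A _ hA => map_indicator_of_le_essSup hg hA, fun X hX => ?_⟩
    rw [faIntegral_eq_of_monotone hg_mono hg_univ ⟨X, (hL X hX).2⟩]
    exact hg_L _ hX
end

section
/- Let $L$ be a linear subspace of $L_\infty = L_\infty(\Omega, \mathcal{A}, P_0)$. There exists a finitely additive probability $P$ with $P \sim P_0$ and $E_P(X) = 0$ for all $X \in L$ if and only if there exists a norm-open convex set $U \subset L_\infty$ such that $L_\infty^+ \subset U \cup \{0\}$ and $(L - L_\infty^+) \cap U = \emptyset$. -/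
/-!
If `P ∼ P₀` is finitely additive and `E_P` vanishes on `L`, then `E_P` is a continuous linear
functional on `L∞` that is strictly positive on `L∞⁺ \ {0}`, so `U = {E_P > 0}` works. Conversely,
Hahn–Banach separates the open convex set `U` from the convex cone `L - L∞⁺` by a functional `ψ`
that is positive on `U`. Being bounded above on a cone, `ψ` is `≤ 0` on it, so `ψ` vanishes on `L`
and is positive on `L∞⁺`; moreover `ψ 1_A > 0` whenever `P₀ A > 0`, because then `1_A ∈ U`. Hence
`P A := ψ 1_A / ψ 1` is an equivalent finitely additive probability.

Both directions rest on one uniqueness principle: a monotone functional `Λ` on `L∞` with `Λ 0 = 0`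
and `Λ (f + d 1_B) = Λ f + d P B` is determined by `P`, because every `f ∈ L∞` lies between a step
function `s` and `s + h`. The layer-cake integral is such a functional (adding `d 1_B` shifts the
layer function `t ↦ P ({t < X} ∩ B)` by `d`), and so are `ψ / ψ 1` and, for fixed `f`, the map
`g ↦ E_P (f + g) - E_P f`; the last instance is what makes `E_P` additive.
-/

open MeasureTheory Set

open FAP

namespace MeasureTheory.Lp

variable {α : Type*} [MeasurableSpace α] {μ : Measure α}

lemma ae_abs_le_norm (f : Lp ℝ ⊤ μ) : ∀ᵐ x ∂μ, |f x| ≤ ‖f‖ := by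
  have hne : eLpNormEssSup (f : α → ℝ) μ ≠ ⊤ := by
    rw [← eLpNorm_exponent_top]
    exact eLpNorm_ne_top f
  filter_upwards [ae_le_eLpNormEssSup (f := (f : α → ℝ)) (μ := μ)] with x hx
  rw [norm_def, eLpNorm_exponent_top]
  have := ENNReal.toReal_mono hne hx
  rwa [Real.enorm_eq_ofReal_abs, ENNReal.toReal_ofReal (abs_nonneg _)] at this

lemma smul_nonneg {a : ℝ} (ha : 0 ≤ a) {f : Lp ℝ ⊤ μ} (hf : 0 ≤ f) : 0 ≤ a • f := by
  refine (coeFn_nonneg _).mp ?_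
  filter_upwards [coeFn_smul a f, (coeFn_nonneg f).mpr hf] with x h hx
  rw [h]
  exact mul_nonneg ha hx

lemma exists_measure_setOf_le_ne_zero {f : Lp ℝ ⊤ μ} (hf : 0 ≤ f) (hf0 : f ≠ 0) :
    ∃ ε > 0, μ {x | ε ≤ f x} ≠ 0 := by
  by_contra! h
  refine hf0 (le_antisymm ((coeFn_le f 0).mp ?_) hf)
  have hlt : ∀ᵐ x ∂μ, ∀ n : ℕ, f x < 1 / (n + 1) := ae_all_iff.mpr fun n => by
    filter_upwards [measure_eq_zero_iff_ae_notMem.mp (h _ Nat.one_div_pos_of_nat)] with x hx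
    simpa using hx
  filter_upwards [hlt, coeFn_zero ℝ ⊤ μ] with x h1 h2
  rw [h2]
  refine not_lt.mp fun hpos => ?_
  obtain ⟨n, hn⟩ := exists_nat_one_div_lt hpos
  exact (h1 n).not_gt hn

end MeasureTheory.Lp

lemma neg_add_sum_range_ite_le_and_lt {M h x : ℝ} {n : ℕ} (hh : 0 < h) (hx : |x| ≤ M)
    (hn : 2 * M / h ≤ n) :
    -M + ∑ k ∈ Finset.range n, (if -M + (k + 1) * h ≤ x then h else 0) ≤ x ∧
      x < -M + ∑ k ∈ Finset.range n, (if -M + (k + 1) * h ≤ x then h else 0) + h := by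
  obtain ⟨hxl, hxu⟩ := abs_le.mp hx
  set r := (x + M) / h
  have hr0 : 0 ≤ r := div_nonneg (by linarith) hh.le
  have hrh : r * h = x + M := div_mul_cancel₀ _ hh.ne'
  have hrn : ⌊r⌋₊ ≤ n :=
    Nat.floor_le_of_le <| (div_le_div_of_nonneg_right (by linarith) hh.le).trans hn
  have hcond : ∀ k : ℕ, -M + (k + 1) * h ≤ x ↔ k < ⌊r⌋₊ := fun k => by
    rw [Nat.lt_iff_add_one_le, Nat.le_floor_iff hr0, le_div_iff₀ hh]
    push_cast
    constructor <;> intro <;> linarith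
  have hsum : ∑ k ∈ Finset.range n, (if -M + (k + 1) * h ≤ x then h else 0) = ⌊r⌋₊ * h := by
    simp only [hcond]
    rw [← Finset.sum_range_add_sum_Ico _ hrn,
      Finset.sum_congr rfl fun k hk => if_pos (Finset.mem_range.mp hk),
      Finset.sum_congr rfl fun k hk => if_neg (not_lt.mpr (Finset.mem_Ico.mp hk).1)]
    simp
  rw [hsum]
  have h1 := Nat.floor_le hr0
  have h2 := Nat.lt_floor_add_one r
  constructor <;> nlinarith

lemma exists_pos_of_isOpen_of_nonpos_of_cone {E : Type*} [AddCommGroup E] [Module ℝ E]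
    [TopologicalSpace E] [IsTopologicalAddGroup E] [ContinuousSMul ℝ E] {U C : Set E}
    (hUo : IsOpen U) (hUc : Convex ℝ U) (hCc : Convex ℝ C) (hC0 : (0 : E) ∈ C)
    (hCsmul : ∀ x ∈ C, ∀ t : ℝ, 0 < t → t • x ∈ C) (hUC : Disjoint U C) :
    ∃ ψ : StrongDual ℝ E, (∀ x ∈ U, 0 < ψ x) ∧ ∀ x ∈ C, ψ x ≤ 0 := by
  obtain ⟨φ, u, hφU, hφC⟩ := geometric_hahn_banach_open hUc hUo hCc hUC
  have hu : u ≤ 0 := by simpa using hφC 0 hC0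
  have hφC' : ∀ x ∈ C, 0 ≤ φ x := fun x hx => by
    by_contra! h
    have := hφC _ (hCsmul x hx ((u - 1) / φ x) (div_pos_of_neg_of_neg (by linarith) h))
    rw [map_smul, smul_eq_mul, div_mul_cancel₀ _ h.ne] at this
    linarith
  exact ⟨-φ, fun x hx => neg_pos.mpr ((hφU x hx).trans_le hu),
    fun x hx => neg_nonpos.mpr (hφC' x hx)⟩

namespace FAP

variable {Ω : Type*} [MeasurableSpace Ω] {P₀ : Measure Ω} {P : Set Ω → ℝ} {X Y : Ω → ℝ}

namespace IsFAPm

variable (hP : IsFAPm P)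
include hP

lemma apply_empty : P ∅ = 0 := by
  have h := hP.2.2 ∅ ∅ .empty .empty (disjoint_empty _)
  rw [union_self] at h
  linarith

lemma inter_add_inter_compl {S B : Set Ω} (hS : MeasurableSet S) (hB : MeasurableSet B) :
    P (S ∩ B) + P (S ∩ Bᶜ) = P S := by
  rw [← hP.2.2 _ _ (hS.inter hB) (hS.inter hB.compl)
    (disjoint_compl_right.mono inter_subset_right inter_subset_right), inter_union_compl]

lemma mono_s17 {S T : Set Ω} (hS : MeasurableSet S) (hT : MeasurableSet T) (h : S ⊆ T) :
    P S ≤ P T := by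
  rw [← hP.inter_add_inter_compl hT hS, inter_eq_right.mpr h]
  linarith [hP.2.1 _ (hT.inter hS.compl)]

variable (hAC : AC P P₀)
include hAC

lemma mono_ae {S T : Set Ω} (hS : MeasurableSet S) (hT : MeasurableSet T) (h : S ≤ᵐ[P₀] T) :
    P S ≤ P T := by
  have hnull : P (S ∩ Tᶜ) = 0 := hAC _ (hS.inter hT.compl) (ae_le_set.mp h)
  rw [← hP.inter_add_inter_compl hS hT, hnull, add_zero]
  exact hP.mono_s17 (hS.inter hT) hT inter_subset_right

lemma congr_ae {S T : Set Ω} (hS : MeasurableSet S) (hT : MeasurableSet T) (h : S =ᵐ[P₀] T) :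
    P S = P T :=
  le_antisymm (hP.mono_ae hAC hS hT h.le) (hP.mono_ae hAC hT hS h.symm.le)

end IsFAPm

section Layers

variable {M t : ℝ}

lemma setOf_lt_ae_eq_empty (hM : ∀ᵐ ω ∂P₀, |X ω| ≤ M) (ht : M ≤ t) :
    {ω | t < X ω} =ᵐ[P₀] (∅ : Set Ω) := by
  refine Filter.eventuallyEq_set.mpr ?_
  filter_upwards [hM] with ω hω
  simp only [mem_empty_iff_false, iff_false, not_lt]
  linarith [le_abs_self (X ω)]

lemma setOf_lt_ae_eq_univ (hM : ∀ᵐ ω ∂P₀, |X ω| ≤ M) (ht : t < -M) :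
    {ω | t < X ω} =ᵐ[P₀] (univ : Set Ω) := by
  refine Filter.eventuallyEq_set.mpr ?_
  filter_upwards [hM] with ω hω
  simp only [mem_univ, iff_true]
  linarith [neg_abs_le (X ω)]

lemma antitone_apply_setOf_lt_inter (hP : IsFAPm P) (hX : Measurable X) {B : Set Ω}
    (hB : MeasurableSet B) : Antitone fun t => P ({ω | t < X ω} ∩ B) := fun _ _ hst =>
  hP.mono_s17 ((measurableSet_lt measurable_const hX).inter hB)
    ((measurableSet_lt measurable_const hX).inter hB)
    (inter_subset_inter_left _ fun _ hω => lt_of_le_of_lt hst hω)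

end Layers

lemma faIntegral_zero (hP : IsFAPm P) : faIntegral P 0 = 0 := by
  rw [faIntegral, setIntegral_congr_fun measurableSet_Ioi (g := 0) fun t (ht : 0 < t) => by
      simp [not_lt.mpr ht.le, hP.apply_empty],
    setIntegral_congr_fun measurableSet_Iio (g := 0) fun t (ht : t < 0) => by simp [ht, hP.1]]
  simp

section LayerCake

variable (hP : IsFAPm P) (hAC : AC P P₀)
include hP hAC

lemma apply_setOf_lt_inter_of_le (hX : Measurable X) {M t : ℝ} (hM : ∀ᵐ ω ∂P₀, |X ω| ≤ M)
    {B : Set Ω} (hB : MeasurableSet B) (ht : M ≤ t) : P ({ω | t < X ω} ∩ B) = 0 := by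
  refine (hP.congr_ae hAC ((measurableSet_lt measurable_const hX).inter hB) .empty ?_).trans
    hP.apply_empty
  simpa using (setOf_lt_ae_eq_empty hM ht).inter (Filter.EventuallyEq.refl _ B)

lemma apply_setOf_lt_inter_of_lt_neg (hX : Measurable X) {M t : ℝ}
    (hM : ∀ᵐ ω ∂P₀, |X ω| ≤ M) {B : Set Ω} (hB : MeasurableSet B) (ht : t < -M) :
    P ({ω | t < X ω} ∩ B) = P B := by
  refine hP.congr_ae hAC ((measurableSet_lt measurable_const hX).inter hB) hB ?_
  simpa using (setOf_lt_ae_eq_univ hM ht).inter (Filter.EventuallyEq.refl _ B)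

lemma faIntegral_eq_intervalIntegral (hX : Measurable X) {M R : ℝ}
    (hM : ∀ᵐ ω ∂P₀, |X ω| ≤ M) (hMR : M < R) (hR : 0 ≤ R) :
    faIntegral P X = (∫ t in -R..R, P {ω | t < X ω}) - R := by
  have hℓ : Antitone fun t => P {ω | t < X ω} := by
    simpa only [inter_univ] using antitone_apply_setOf_lt_inter hP hX .univ
  have hzero : ∀ t, M ≤ t → P {ω | t < X ω} = 0 := fun t ht => by
    simpa using apply_setOf_lt_inter_of_le hP hAC hX hM .univ ht
  have hone : ∀ t, t < -M → P {ω | t < X ω} = 1 := fun t ht => by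
    simpa [hP.1] using apply_setOf_lt_inter_of_lt_neg hP hAC hX hM .univ ht
  have hpos : ∫ t in Ioi 0, P {ω | t < X ω} = ∫ t in 0..R, P {ω | t < X ω} := by
    rw [intervalIntegral.integral_of_le hR,
      setIntegral_eq_of_subset_of_forall_sdiff_eq_zero measurableSet_Ioi Ioc_subset_Ioi_self]
    rintro t ⟨ht0, htR⟩
    exact hzero t (hMR.trans (not_le.mp fun h => htR ⟨ht0, h⟩)).le
  have hneg : ∫ t in Iio 0, (1 - P {ω | t < X ω}) = ∫ t in -R..0, (1 - P {ω | t < X ω}) := by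
    rw [intervalIntegral.integral_of_le (by linarith), integral_Ioc_eq_integral_Ioo,
      setIntegral_eq_of_subset_of_forall_sdiff_eq_zero measurableSet_Iio Ioo_subset_Iio_self]
    rintro t ⟨ht0, htR⟩
    rw [hone t ((not_lt.mp fun h => htR ⟨h, ht0⟩).trans_lt (neg_lt_neg hMR)), sub_self]
  rw [faIntegral, hpos, hneg, intervalIntegral.integral_sub intervalIntegrable_const
    hℓ.intervalIntegrable, intervalIntegral.integral_const, smul_eq_mul, mul_one,
    ← intervalIntegral.integral_add_adjacent_intervals (a := -R) (b := 0) (c := R)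
      hℓ.intervalIntegrable hℓ.intervalIntegrable]
  ring

lemma faIntegral_mono (hX : Measurable X) (hY : Measurable Y) {M₁ M₂ : ℝ}
    (hMX : ∀ᵐ ω ∂P₀, |X ω| ≤ M₁) (hMY : ∀ᵐ ω ∂P₀, |Y ω| ≤ M₂) (hXY : X ≤ᵐ[P₀] Y) :
    faIntegral P X ≤ faIntegral P Y := by
  set R := |M₁| + |M₂| + 1
  have hR : 0 ≤ R := by positivity
  rw [faIntegral_eq_intervalIntegral hP hAC hX hMX (by grind) hR,
    faIntegral_eq_intervalIntegral hP hAC hY hMY (by grind) hR, sub_le_sub_iff_right]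
  refine intervalIntegral.integral_mono_on (by linarith) ?_ ?_ fun t _ => ?_
  · simpa only [inter_univ] using (antitone_apply_setOf_lt_inter hP hX .univ).intervalIntegrable
  · simpa only [inter_univ] using (antitone_apply_setOf_lt_inter hP hY .univ).intervalIntegrable
  refine hP.mono_ae hAC (measurableSet_lt measurable_const hX)
    (measurableSet_lt measurable_const hY) ?_
  filter_upwards [hXY] with ω h using fun ht : t < X ω => ht.trans_le h

lemma faIntegral_congr_ae (hX : Measurable X) (hY : Measurable Y) (hXY : X =ᵐ[P₀] Y) :
    faIntegral P X = faIntegral P Y := by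
  have h : ∀ t, P {ω | t < X ω} = P {ω | t < Y ω} := fun t =>
    hP.congr_ae hAC (measurableSet_lt measurable_const hX) (measurableSet_lt measurable_const hY)
      (Filter.eventuallyEq_set.mpr (by filter_upwards [hXY] with ω h using by rw [h]))
  simp only [faIntegral, h]

lemma intervalIntegral_apply_setOf_sub_lt_inter (hX : Measurable X) {M : ℝ}
    (hM : ∀ᵐ ω ∂P₀, |X ω| ≤ M) {B : Set Ω} (hB : MeasurableSet B) (d : ℝ) {R : ℝ}
    (hR : |M| + |d| < R) :
    ∫ t in -R..R, P ({ω | t - d < X ω} ∩ B) = (∫ t in -R..R, P ({ω | t < X ω} ∩ B)) + d * P B := by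
  set g : ℝ → ℝ := fun t => P ({ω | t < X ω} ∩ B)
  have hg : Antitone g := antitone_apply_setOf_lt_inter hP hX hB
  -- The shifted window `[-R - d, R - d]` gains `[-R - d, -R]`, where `g = P B`, and loses
  -- `[R - d, R]`, where `g = 0`.
  have hlow : ∫ t in (-R - d)..(-R), g t = d * P B := by
    rw [intervalIntegral.integral_congr (g := fun _ => P B) fun t ht => ?_]
    · simp only [intervalIntegral.integral_const, smul_eq_mul]
      ring
    refine apply_setOf_lt_inter_of_lt_neg hP hAC hX hM hB ?_
    have := ht.2
    grind
  have hhigh : ∫ t in (R - d)..R, g t = 0 := by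
    rw [intervalIntegral.integral_congr (g := fun _ => 0) fun t ht => ?_]
    · simp
    refine apply_setOf_lt_inter_of_le hP hAC hX hM hB ?_
    have := ht.1
    grind
  have := intervalIntegral.integral_interval_sub_interval_comm (a := -R - d) (b := R - d)
    (c := -R) (d := R) (μ := volume) hg.intervalIntegrable hg.intervalIntegrable
    hg.intervalIntegrable
  rw [intervalIntegral.integral_comp_sub_right g d]
  linarith

lemma faIntegral_add_indicator (hX : Measurable X) {M : ℝ} (hM : ∀ᵐ ω ∂P₀, |X ω| ≤ M)
    {B : Set Ω} (hB : MeasurableSet B) (d : ℝ) :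
    faIntegral P (X + B.indicator fun _ => d) = faIntegral P X + d * P B := by
  set g : ℝ → ℝ := fun t => P ({ω | t < X ω} ∩ B)
  set g' : ℝ → ℝ := fun t => P ({ω | t < X ω} ∩ Bᶜ)
  have hg : Antitone g := antitone_apply_setOf_lt_inter hP hX hB
  have hgd : Antitone fun t => g (t - d) := fun s t hst => hg (by linarith)
  have hg' : Antitone g' := antitone_apply_setOf_lt_inter hP hX hB.compl
  have hXd : Measurable (X + B.indicator fun _ => d) := hX.add (measurable_const.indicator hB)
  have hXdM : ∀ᵐ ω ∂P₀, |(X + B.indicator fun _ => d) ω| ≤ |M| + |d| := by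
    filter_upwards [hM] with ω hω
    refine (abs_add_le _ _).trans (add_le_add (hω.trans (le_abs_self M)) ?_)
    by_cases h : ω ∈ B <;> simp [h]
  have hlevel : ∀ t, P {ω | t < (X + B.indicator fun _ => d) ω} = g (t - d) + g' t := by
    intro t
    rw [← hP.inter_add_inter_compl (measurableSet_lt measurable_const hXd) hB]
    congr 2 <;> ext ω <;> by_cases hω : ω ∈ B <;> simp [hω, sub_lt_iff_lt_add]
  have hlevel' : ∀ t, P {ω | t < X ω} = g t + g' t := fun t =>
    (hP.inter_add_inter_compl (measurableSet_lt measurable_const hX) hB).symm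
  set R := |M| + |d| + 1
  rw [faIntegral_eq_intervalIntegral hP hAC hXd hXdM (R := R) (by linarith) (by positivity),
    faIntegral_eq_intervalIntegral hP hAC hX hM (R := R) (by grind) (by positivity)]
  simp only [hlevel, hlevel']
  rw [intervalIntegral.integral_add hgd.intervalIntegrable hg'.intervalIntegrable,
    intervalIntegral.integral_add hg.intervalIntegrable hg'.intervalIntegrable,
    intervalIntegral_apply_setOf_sub_lt_inter hP hAC hX hM hB d (by linarith)]
  ring

end LayerCake

section LInfty

variable [IsFiniteMeasure P₀]

variable (P₀) in
noncomputable def indicatorLp {B : Set Ω} (hB : MeasurableSet B) (d : ℝ) : Lp ℝ ⊤ P₀ :=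
  indicatorConstLp ⊤ hB (measure_ne_top P₀ B) d

lemma coeFn_indicatorLp {B : Set Ω} (hB : MeasurableSet B) (d : ℝ) :
    indicatorLp P₀ hB d =ᵐ[P₀] B.indicator fun _ => d :=
  indicatorConstLp_coeFn

section IndicatorLp

variable {A B : Set Ω} (hA : MeasurableSet A) (hB : MeasurableSet B)

lemma indicatorLp_eq_smul (d : ℝ) : indicatorLp P₀ hB d = d • indicatorLp P₀ hB 1 := by
  refine Lp.ext ?_
  filter_upwards [coeFn_indicatorLp (P₀ := P₀) hB d, coeFn_indicatorLp (P₀ := P₀) hB 1,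
    Lp.coeFn_smul d (indicatorLp P₀ hB 1)] with ω hd h₁ h
  rw [hd, h, Pi.smul_apply, h₁]
  by_cases hω : ω ∈ B <;> simp [hω]

lemma indicatorLp_union (hAB : Disjoint A B) (d : ℝ) :
    indicatorLp P₀ (hA.union hB) d = indicatorLp P₀ hA d + indicatorLp P₀ hB d :=
  indicatorConstLp_disjoint_union hA hB _ _ hAB d

lemma indicatorLp_one_eq_zero_iff : indicatorLp P₀ hB 1 = 0 ↔ P₀ B = 0 := by
  rw [indicatorLp, ← indicatorConstLp_empty (p := ⊤) (μ := P₀) (c := (1 : ℝ)),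
    indicatorConstLp_inj _ _ _ _ one_ne_zero, ae_eq_empty]

lemma ae_nonneg_indicatorLp {d : ℝ} (hd : 0 ≤ d) : ∀ᵐ ω ∂P₀, 0 ≤ indicatorLp P₀ hB d ω := by
  filter_upwards [coeFn_indicatorLp (P₀ := P₀) hB d] with ω h
  rw [h]
  exact indicator_nonneg (fun _ _ => hd) ω

end IndicatorLp

lemma exists_sum_indicatorLp_le (f : Lp ℝ ⊤ P₀) {h : ℝ} (hh : 0 < h) :
    ∃ (n : ℕ) (B : ℕ → Set Ω) (hB : ∀ k, MeasurableSet (B k)),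
      indicatorLp P₀ .univ (-‖f‖) + ∑ k ∈ Finset.range n, indicatorLp P₀ (hB k) h ≤ f ∧
      f ≤ indicatorLp P₀ .univ (-‖f‖) + ∑ k ∈ Finset.range n, indicatorLp P₀ (hB k) h +
        indicatorLp P₀ .univ h := by
  set B : ℕ → Set Ω := fun k => {ω | -‖f‖ + (k + 1) * h ≤ f ω}
  have hB : ∀ k, MeasurableSet (B k) := fun k =>
    measurableSet_le measurable_const (Lp.stronglyMeasurable f).measurable
  set n := ⌈2 * ‖f‖ / h⌉₊
  set s := indicatorLp P₀ .univ (-‖f‖) + ∑ k ∈ Finset.range n, indicatorLp P₀ (hB k) h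
  have hs : ∀ᵐ ω ∂P₀, s ω =
      -‖f‖ + ∑ k ∈ Finset.range n, (if -‖f‖ + (k + 1) * h ≤ f ω then h else 0) := by
    filter_upwards [Lp.coeFn_add (indicatorLp P₀ .univ (-‖f‖))
        (∑ k ∈ Finset.range n, indicatorLp P₀ (hB k) h),
      coeFn_indicatorLp (P₀ := P₀) .univ (-‖f‖),
      Lp.coeFn_fun_finsetSum (Finset.range n) fun k => indicatorLp P₀ (hB k) h,
      ae_all_iff.mpr fun k => coeFn_indicatorLp (P₀ := P₀) (hB k) h] with ω h1 h2 h3 h4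
    simp only [s, h1, Pi.add_apply, h2, h3, indicator_univ]
    simp only [h4, indicator_apply, B, mem_ofPred_eq]
  have hsf := fun ω (hω : |f ω| ≤ ‖f‖) => neg_add_sum_range_ite_le_and_lt hh hω (Nat.le_ceil _)
  refine ⟨n, B, hB, (Lp.coeFn_le _ _).mp ?_, (Lp.coeFn_le _ _).mp ?_⟩
  · filter_upwards [hs, Lp.ae_abs_le_norm f] with ω h1 h2
    rw [h1]
    exact (hsf ω h2).1
  · filter_upwards [hs, Lp.ae_abs_le_norm f, Lp.coeFn_add s (indicatorLp P₀ .univ h),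
      coeFn_indicatorLp (P₀ := P₀) .univ h] with ω h1 h2 h3 h4
    rw [h3, Pi.add_apply, h1, h4, indicator_univ]
    exact (hsf ω h2).2.le

structure IsIntegralAgainst (P : Set Ω → ℝ) (Λ : Lp ℝ ⊤ P₀ → ℝ) : Prop where
  mono_s17 : Monotone Λ
  map_zero : Λ 0 = 0
  map_add_indicatorLp (f : Lp ℝ ⊤ P₀) {B : Set Ω} (hB : MeasurableSet B) (d : ℝ) :
    Λ (f + indicatorLp P₀ hB d) = Λ f + d * P B

namespace IsIntegralAgainst

variable {Λ : Lp ℝ ⊤ P₀ → ℝ} (hΛ : IsIntegralAgainst P Λ)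
include hΛ

lemma map_indicatorLp {B : Set Ω} (hB : MeasurableSet B) (d : ℝ) :
    Λ (indicatorLp P₀ hB d) = d * P B := by
  simpa [hΛ.map_zero] using hΛ.map_add_indicatorLp 0 hB d

lemma map_add_sum {ι : Type*} (f : Lp ℝ ⊤ P₀) (F : Finset ι) {B : ι → Set Ω}
    (hB : ∀ k, MeasurableSet (B k)) (d : ι → ℝ) :
    Λ (f + ∑ k ∈ F, indicatorLp P₀ (hB k) (d k)) = Λ f + ∑ k ∈ F, d k * P (B k) := by
  induction F using Finset.cons_induction with
  | empty => simp
  | cons a F ha ih =>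
    rw [Finset.sum_cons, Finset.sum_cons, ← add_assoc, add_right_comm,
      hΛ.map_add_indicatorLp, ih]
    ring

lemma abs_le_norm (hP : P univ = 1) (f : Lp ℝ ⊤ P₀) : |Λ f| ≤ ‖f‖ := by
  have hlow : indicatorLp P₀ .univ (-‖f‖) ≤ f := by
    refine (Lp.coeFn_le _ _).mp ?_
    filter_upwards [coeFn_indicatorLp (P₀ := P₀) .univ (-‖f‖), Lp.ae_abs_le_norm f] with ω h1 h2
    rw [h1, indicator_univ]
    exact neg_le_of_abs_le h2
  have hup : f ≤ indicatorLp P₀ .univ ‖f‖ := by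
    refine (Lp.coeFn_le _ _).mp ?_
    filter_upwards [coeFn_indicatorLp (P₀ := P₀) .univ ‖f‖, Lp.ae_abs_le_norm f] with ω h1 h2
    rw [h1, indicator_univ]
    exact le_of_abs_le h2
  have h1 := hΛ.mono_s17 hlow
  have h2 := hΛ.mono_s17 hup
  rw [hΛ.map_indicatorLp, hP] at h1 h2
  exact abs_le.mpr ⟨by linarith, by linarith⟩

lemma apply_le {Λ' : Lp ℝ ⊤ P₀ → ℝ} (hΛ' : IsIntegralAgainst P Λ') (f : Lp ℝ ⊤ P₀) :
    Λ f ≤ Λ' f := by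
  refine le_of_forall_pos_le_add fun ε hε => ?_
  set h := ε / (|P univ| + 1)
  have hh : 0 < h := by positivity
  have hhP : h * P univ ≤ ε := calc
    h * P univ ≤ h * (|P univ| + 1) := by gcongr; linarith [le_abs_self (P univ)]
    _ = ε := div_mul_cancel₀ _ (by positivity)
  obtain ⟨n, B, hB, hle, hge⟩ := exists_sum_indicatorLp_le f hh
  set s := indicatorLp P₀ .univ (-‖f‖) + ∑ k ∈ Finset.range n, indicatorLp P₀ (hB k) h
  have hs : Λ s = Λ' s := by
    rw [hΛ.map_add_sum, hΛ'.map_add_sum, hΛ.map_indicatorLp, hΛ'.map_indicatorLp]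
  calc Λ f ≤ Λ (s + indicatorLp P₀ .univ h) := hΛ.mono_s17 hge
    _ = Λ' s + h * P univ := by rw [hΛ.map_add_indicatorLp, hs]
    _ ≤ Λ' f + ε := add_le_add (hΛ'.mono_s17 hle) hhP

theorem unique {Λ' : Lp ℝ ⊤ P₀ → ℝ} (hΛ' : IsIntegralAgainst P Λ') : Λ = Λ' :=
  funext fun f => le_antisymm (hΛ.apply_le hΛ' f) (hΛ'.apply_le hΛ f)

end IsIntegralAgainst

section FaIntegralLp

variable (hP : IsFAPm P) (hAC : AC P P₀)
include hP hAC

theorem isIntegralAgainst_faIntegral :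
    IsIntegralAgainst P fun f : Lp ℝ ⊤ P₀ => faIntegral P f where
  mono_s17 f g hfg := faIntegral_mono hP hAC (Lp.stronglyMeasurable f).measurable
    (Lp.stronglyMeasurable g).measurable (Lp.ae_abs_le_norm f) (Lp.ae_abs_le_norm g)
    ((Lp.coeFn_le f g).mpr hfg)
  map_zero := (faIntegral_congr_ae hP hAC (Lp.stronglyMeasurable _).measurable measurable_const
    (Lp.coeFn_zero ℝ ⊤ P₀)).trans (faIntegral_zero hP)
  map_add_indicatorLp f B hB d := by
    rw [faIntegral_congr_ae hP hAC (Lp.stronglyMeasurable _).measurable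
      ((Lp.stronglyMeasurable f).measurable.add (measurable_const.indicator hB))
      ((Lp.coeFn_add _ _).trans (Filter.EventuallyEq.rfl.add (coeFn_indicatorLp hB d))),
      faIntegral_add_indicator hP hAC (Lp.stronglyMeasurable f).measurable (Lp.ae_abs_le_norm f) hB]

theorem faIntegral_coe_add (f g : Lp ℝ ⊤ P₀) :
    faIntegral P ⇑(f + g) = faIntegral P f + faIntegral P g := by
  have hE := isIntegralAgainst_faIntegral hP hAC
  have hshift : IsIntegralAgainst P fun g : Lp ℝ ⊤ P₀ => faIntegral P ⇑(f + g) - faIntegral P f :=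
    { mono_s17 := fun g₁ g₂ hg => sub_le_sub_right (hE.mono_s17 (add_le_add_right hg f)) _
      map_zero := by simp
      map_add_indicatorLp := fun g B hB d => by
        simp only [← add_assoc, hE.map_add_indicatorLp]
        ring }
  linarith [congrFun (hshift.unique hE) g]

theorem exists_continuousLinearMap_eq_faIntegral :
    ∃ E : Lp ℝ ⊤ P₀ →L[ℝ] ℝ, ∀ f, E f = faIntegral P f := by
  let E : Lp ℝ ⊤ P₀ →+ ℝ :=
    { toFun := fun f => faIntegral P f
      map_zero' := (isIntegralAgainst_faIntegral hP hAC).map_zero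
      map_add' := faIntegral_coe_add hP hAC }
  refine ⟨E.toRealLinearMap (AddMonoidHomClass.continuous_of_bound E 1 fun f => ?_), fun _ => rfl⟩
  rw [Real.norm_eq_abs, one_mul]
  exact (isIntegralAgainst_faIntegral hP hAC).abs_le_norm hP.1 f

end FaIntegralLp

open Classical in
noncomputable def setFunctionOf (Λ : Lp ℝ ⊤ P₀ →ₗ[ℝ] ℝ) (A : Set Ω) : ℝ :=
  if hA : MeasurableSet A then Λ (indicatorLp P₀ hA 1) else 0

variable {Λ : Lp ℝ ⊤ P₀ →ₗ[ℝ] ℝ}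

lemma setFunctionOf_of_measurableSet {A : Set Ω} (hA : MeasurableSet A) :
    setFunctionOf Λ A = Λ (indicatorLp P₀ hA 1) := by
  simp [setFunctionOf, hA]

lemma isIntegralAgainst_setFunctionOf (hΛ : Monotone Λ) :
    IsIntegralAgainst (setFunctionOf Λ) Λ where
  mono_s17 := hΛ
  map_zero := map_zero Λ
  map_add_indicatorLp f B hB d := by
    rw [map_add, indicatorLp_eq_smul, map_smul, smul_eq_mul, setFunctionOf_of_measurableSet hB]

lemma isFAPm_setFunctionOf (hΛ : Monotone Λ) (h1 : Λ (indicatorLp P₀ .univ 1) = 1) :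
    IsFAPm (setFunctionOf Λ) := by
  refine ⟨by rw [setFunctionOf_of_measurableSet .univ, h1], fun A hA => ?_,
    fun A B hA hB hAB => ?_⟩
  · rw [setFunctionOf_of_measurableSet hA, ← map_zero Λ]
    exact hΛ ((Lp.coeFn_nonneg _).mp (ae_nonneg_indicatorLp hA zero_le_one))
  · rw [setFunctionOf_of_measurableSet (hA.union hB), setFunctionOf_of_measurableSet hA,
      setFunctionOf_of_measurableSet hB, indicatorLp_union hA hB hAB, map_add]

end LInfty

def subPositiveCone (L : Submodule ℝ (Lp ℝ ⊤ P₀)) : Set (Lp ℝ ⊤ P₀) :=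
  {g | ∃ X ∈ L, ∃ Z : Lp ℝ ⊤ P₀, (∀ᵐ ω ∂P₀, 0 ≤ Z ω) ∧ g = X - Z}

section Cone

variable (L : Submodule ℝ (Lp ℝ ⊤ P₀))

lemma convex_subPositiveCone : Convex ℝ (subPositiveCone L) := by
  rintro _ ⟨X₁, hX₁, Z₁, hZ₁, rfl⟩ _ ⟨X₂, hX₂, Z₂, hZ₂, rfl⟩ a b ha hb -
  refine ⟨a • X₁ + b • X₂, L.add_mem (L.smul_mem a hX₁) (L.smul_mem b hX₂), a • Z₁ + b • Z₂,
    (Lp.coeFn_nonneg _).mpr ?_, by simp only [smul_sub]; abel⟩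
  exact add_nonneg (Lp.smul_nonneg ha ((Lp.coeFn_nonneg _).mp hZ₁))
    (Lp.smul_nonneg hb ((Lp.coeFn_nonneg _).mp hZ₂))

lemma smul_mem_subPositiveCone {g : Lp ℝ ⊤ P₀} (hg : g ∈ subPositiveCone L) {t : ℝ}
    (ht : 0 ≤ t) : t • g ∈ subPositiveCone L := by
  obtain ⟨X, hX, Z, hZ, rfl⟩ := hg
  refine ⟨t • X, L.smul_mem t hX, t • Z, (Lp.coeFn_nonneg _).mpr ?_, smul_sub t X Z⟩
  exact Lp.smul_nonneg ht ((Lp.coeFn_nonneg Z).mp hZ)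

lemma sub_mem_subPositiveCone {X Z : Lp ℝ ⊤ P₀} (hX : X ∈ L) (hZ : 0 ≤ Z) :
    X - Z ∈ subPositiveCone L :=
  ⟨X, hX, Z, (Lp.coeFn_nonneg Z).mpr hZ, rfl⟩

end Cone

theorem faIntegral_pos [IsFiniteMeasure P₀] (hP : IsFAPm P) (hEq : EquivP P P₀)
    {f : Lp ℝ ⊤ P₀} (hf : 0 ≤ f) (hf0 : f ≠ 0) : 0 < faIntegral P f := by
  have hE := isIntegralAgainst_faIntegral hP fun A hA => (hEq A hA).mpr
  obtain ⟨ε, hε, hB0⟩ := Lp.exists_measure_setOf_le_ne_zero hf hf0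
  have hB : MeasurableSet {ω | ε ≤ f ω} :=
    measurableSet_le measurable_const (Lp.stronglyMeasurable f).measurable
  have hPB : 0 < P {ω | ε ≤ f ω} := (hP.2.1 _ hB).lt_of_ne' fun h => hB0 ((hEq _ hB).mp h)
  have hind : indicatorLp P₀ hB ε ≤ f := by
    refine (Lp.coeFn_le _ _).mp ?_
    filter_upwards [coeFn_indicatorLp (P₀ := P₀) hB ε, (Lp.coeFn_nonneg f).mpr hf] with ω h hω
    rw [h, indicator_apply]
    split_ifs with hmem
    exacts [hmem, hω]
  calc 0 < ε * P {ω | ε ≤ f ω} := mul_pos hε hPB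
    _ = faIntegral P (indicatorLp P₀ hB ε) := (hE.map_indicatorLp hB ε).symm
    _ ≤ faIntegral P f := hE.mono_s17 hind

section Main

variable (L : Submodule ℝ (Lp ℝ ⊤ P₀))

theorem exists_isOpen_convex_of_faIntegral_eq_zero [IsFiniteMeasure P₀] (hP : IsFAPm P)
    (hEq : EquivP P P₀) (hL : ∀ f ∈ L, faIntegral P (f : Ω → ℝ) = 0) :
    ∃ U : Set (Lp ℝ ⊤ P₀), IsOpen U ∧ Convex ℝ U ∧
      {f : Lp ℝ ⊤ P₀ | ∀ᵐ ω ∂P₀, 0 ≤ f ω} ⊆ U ∪ {0} ∧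
      subPositiveCone L ∩ U = ∅ := by
  have hAC : AC P P₀ := fun A hA => (hEq A hA).mpr
  have hE := isIntegralAgainst_faIntegral hP hAC
  obtain ⟨E, hEf⟩ := exists_continuousLinearMap_eq_faIntegral hP hAC
  refine ⟨{g | 0 < E g}, isOpen_lt continuous_const E.continuous,
    convex_halfSpace_gt E.toLinearMap.isLinear 0, fun f hf => ?_, ?_⟩
  · obtain rfl | hf0 := eq_or_ne f 0
    · exact .inr rfl
    exact .inl ((faIntegral_pos hP hEq ((Lp.coeFn_nonneg f).mp hf) hf0).trans_eq (hEf f).symm)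
  · refine eq_empty_iff_forall_notMem.mpr ?_
    rintro _ ⟨⟨X, hX, Z, hZ, rfl⟩, hU⟩
    have hEZ : 0 ≤ E Z := by
      have h := hE.mono_s17 ((Lp.coeFn_nonneg Z).mp hZ)
      rw [hE.map_zero] at h
      exact h.trans_eq (hEf Z).symm
    have hEX : E X = 0 := (hEf X).trans (hL X hX)
    simp only [mem_ofPred_eq, map_sub, hEX] at hU
    linarith

lemma exists_monotone_dual_of_isOpen_convex [IsFiniteMeasure P₀] {U : Set (Lp ℝ ⊤ P₀)}
    (hUo : IsOpen U) (hUc : Convex ℝ U)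
    (hpos : {f : Lp ℝ ⊤ P₀ | ∀ᵐ ω ∂P₀, 0 ≤ f ω} ⊆ U ∪ {0})
    (hdisj : subPositiveCone L ∩ U = ∅) :
    ∃ ψ : StrongDual ℝ (Lp ℝ ⊤ P₀), Monotone ψ ∧ (∀ X ∈ L, ψ X = 0) ∧
      ∀ {A : Set Ω} (hA : MeasurableSet A), P₀ A ≠ 0 → 0 < ψ (indicatorLp P₀ hA 1) := by
  obtain ⟨ψ, hψU, hψC⟩ := exists_pos_of_isOpen_of_nonpos_of_cone hUo hUc
    (convex_subPositiveCone L) (by simpa using sub_mem_subPositiveCone L L.zero_mem le_rfl)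
    (fun x hx t ht => smul_mem_subPositiveCone L hx ht.le)
    (disjoint_iff_inter_eq_empty.mpr ((inter_comm _ _).trans hdisj))
  refine ⟨ψ, fun f g hfg => ?_, fun X hX => le_antisymm ?_ ?_, fun hA h0 => hψU _ ?_⟩
  · have := hψC _ (sub_mem_subPositiveCone L L.zero_mem (sub_nonneg.mpr hfg))
    rw [map_sub, map_sub, map_zero] at this
    linarith
  · simpa using hψC _ (sub_mem_subPositiveCone L hX le_rfl)
  · simpa using hψC _ (sub_mem_subPositiveCone L (L.neg_mem hX) le_rfl)
  · exact (hpos (ae_nonneg_indicatorLp hA zero_le_one)).resolve_right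
      ((indicatorLp_one_eq_zero_iff hA).not.mpr h0)

theorem exists_faIntegral_eq_zero_of_isOpen_convex [IsFiniteMeasure P₀] [NeZero P₀]
    {U : Set (Lp ℝ ⊤ P₀)} (hUo : IsOpen U) (hUc : Convex ℝ U)
    (hpos : {f : Lp ℝ ⊤ P₀ | ∀ᵐ ω ∂P₀, 0 ≤ f ω} ⊆ U ∪ {0})
    (hdisj : subPositiveCone L ∩ U = ∅) :
    ∃ P : Set Ω → ℝ, IsFAPm P ∧ EquivP P P₀ ∧ ∀ f ∈ L, faIntegral P (f : Ω → ℝ) = 0 := by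
  obtain ⟨ψ, hψmono, hψL, hψind⟩ := exists_monotone_dual_of_isOpen_convex L hUo hUc hpos hdisj
  have hψ1 := hψind .univ ((by simp [NeZero.ne P₀]))
  set Λ : Lp ℝ ⊤ P₀ →ₗ[ℝ] ℝ := (ψ (indicatorLp P₀ .univ 1))⁻¹ • (ψ : Lp ℝ ⊤ P₀ →ₗ[ℝ] ℝ)
  have hΛ : Monotone Λ := fun f g hfg =>
    mul_le_mul_of_nonneg_left (hψmono hfg) (inv_nonneg.mpr hψ1.le)
  have hP := isFAPm_setFunctionOf hΛ (by simp [Λ, hψ1.ne'])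
  have hEq : EquivP (setFunctionOf Λ) P₀ := fun A hA => by
    rw [setFunctionOf_of_measurableSet hA]
    refine ⟨fun h => not_not.mp fun h0 => ?_, fun h => ?_⟩
    · simp only [Λ, LinearMap.smul_apply, smul_eq_mul, mul_eq_zero, inv_eq_zero] at h
      exact h.elim hψ1.ne' (hψind hA h0).ne'
    · rw [(indicatorLp_one_eq_zero_iff hA).mpr h, map_zero]
  refine ⟨setFunctionOf Λ, hP, hEq, fun f hf => ?_⟩
  rw [congrFun ((isIntegralAgainst_faIntegral hP fun A hA => (hEq A hA).mpr).unique
    (isIntegralAgainst_setFunctionOf hΛ)) f]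
  simp [Λ, hψL f hf]

end Main

end FAP

/-- there is an equivalent martingale finitely additive probability
iff there is a norm-open convex U ⊆ L∞ with L∞⁺ ⊆ U ∪ {0} and (L - L∞⁺) ∩ U = ∅. -/
theorem stmt17 {Ω : Type*} [MeasurableSpace Ω] (P₀ : Measure Ω) [IsProbabilityMeasure P₀]
    (L : Submodule ℝ (Lp ℝ ⊤ P₀)) :
    (∃ P : Set Ω → ℝ, FAP.IsFAPm P ∧ FAP.EquivP P P₀ ∧
        ∀ f ∈ L, FAP.faIntegral P (f : Ω → ℝ) = 0)
    ↔ ∃ U : Set (Lp ℝ ⊤ P₀), IsOpen U ∧ Convex ℝ U ∧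
        {f : Lp ℝ ⊤ P₀ | ∀ᵐ ω ∂P₀, 0 ≤ f ω} ⊆ U ∪ {0} ∧
        {g : Lp ℝ ⊤ P₀ | ∃ X ∈ L, ∃ Z : Lp ℝ ⊤ P₀,
          (∀ᵐ ω ∂P₀, 0 ≤ Z ω) ∧ g = X - Z} ∩ U = ∅ :=
  ⟨fun ⟨_, hP, hEq, hL⟩ => exists_isOpen_convex_of_faIntegral_eq_zero L hP hEq hL,
    fun ⟨_, hUo, hUc, hpos, hdisj⟩ =>
      exists_faIntegral_eq_zero_of_isOpen_convex L hUo hUc hpos hdisj⟩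
end
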